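/- Let m ≥ 2, let f_l : ℝ → ℝ (l = 1,...,m) be nondecreasing functions with f_l(0) = 0 and f_l ≥ 0 on [0,∞). Suppose (u¹,...,uᵐ) and (v¹,...,vᵐ) are two m-tuples of nonnegative grid functions on a 1D uniform grid, vanishing at the boundary, each tuple pointwise segregated (u^p_α · u^q_α = 0 for p ≠ q, same for v), and both satisfying at every interior point α, for all l: L_h û^l_α = f_l(u^l_α) whenever u^l_α > 0, and L_h û^l_α ≤ f_l(u^l_α) whenever u^l_α = 0 (same for v), where û^l = u^l - ∑_{j≠l} u^j. Then for each l, max_α (û^l_α - v̂^l_α) = max over the set {α : u^l_α ≤ v^l_α} of (û^l_α - v̂^l_α). -/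

import Mathlib

/-!
At a point where `u^l > v^l ≥ 0` the equation for `u` is active, so monotonicity of `f_l` gives
`L_h v̂^l ≤ f_l(v^l) ≤ f_l(u^l) = L_h û^l`: the difference `û^l - v̂^l` is discretely subharmonic
there. Hence its maximum, if attained at such a point, is attained at the left neighbour as well;
moving left, one reaches a point with `u^l ≤ v^l` at the latest at the boundary point `0`.
-/

/-- The "hat" combination `û^l = u^l - ∑_{j ≠ l} u^j`. -/
noncomputable def hatFn {m : ℕ} (u : Fin m → ℕ → ℝ) (l : Fin m) (α : ℕ) : ℝ :=
  u l α - ∑ j ∈ Finset.univ \ {l}, u j α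

/-- One-dimensional discrete Laplacian with step `h`. -/
noncomputable def lap1 (h : ℝ) (w : ℕ → ℝ) (i : ℕ) : ℝ :=
  (w (i - 1) - 2 * w i + w (i + 1)) / h ^ 2

section DiscreteMaximumPrinciple

variable {w : ℕ → ℝ} {N : ℕ} {p : ℕ → Prop}

theorem exists_eq_of_isMax_of_subharmonic
    (hsub : ∀ α ≤ N, ¬ p α → 0 < α ∧ α < N ∧ 2 * w α ≤ w (α - 1) + w (α + 1))
    {α : ℕ} (hαN : α ≤ N) (hmax : ∀ β ≤ N, w β ≤ w α) : ∃ β ≤ N, p β ∧ w β = w α := by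
  induction α with
  | zero => exact ⟨0, hαN, by_contra fun h0 => (hsub 0 hαN h0).1.false, rfl⟩
  | succ α ih =>
    by_cases hp : p (α + 1)
    · exact ⟨α + 1, hαN, hp, rfl⟩
    obtain ⟨-, hlt, hconv⟩ := hsub (α + 1) hαN hp
    have hleft : w α ≤ w (α + 1) := hmax α (by omega)
    have hright : w (α + 2) ≤ w (α + 1) := hmax (α + 2) hlt
    have hflat : w α = w (α + 1) := by simp only [add_tsub_cancel_right] at hconv; linarith
    rw [← hflat] at hmax ⊢
    exact ih (by omega) hmax

theorem Finset.sup'_Icc_eq_sup'_filter_of_subharmonic [DecidablePred p]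
    (hsub : ∀ α ≤ N, ¬ p α → 0 < α ∧ α < N ∧ 2 * w α ≤ w (α - 1) + w (α + 1))
    (hne : (Finset.Icc 0 N).Nonempty) (hne' : ((Finset.Icc 0 N).filter p).Nonempty) :
    (Finset.Icc 0 N).sup' hne w = ((Finset.Icc 0 N).filter p).sup' hne' w := by
  refine le_antisymm ?_ (Finset.sup'_mono w (Finset.filter_subset p _) hne')
  obtain ⟨α, hα, hαmax⟩ := Finset.exists_mem_eq_sup' hne w
  have hαN : α ≤ N := (Finset.mem_Icc.mp hα).2
  obtain ⟨β, hβN, hpβ, hβ⟩ := exists_eq_of_isMax_of_subharmonic hsub hαN fun β hβ =>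
    hαmax ▸ Finset.le_sup' w (Finset.mem_Icc.mpr ⟨β.zero_le, hβ⟩)
  rw [hαmax, ← hβ]
  exact Finset.le_sup' w (Finset.mem_filter.mpr ⟨Finset.mem_Icc.mpr ⟨β.zero_le, hβN⟩, hpβ⟩)

end DiscreteMaximumPrinciple

theorem lap1_sub (h : ℝ) (a b : ℕ → ℝ) (i : ℕ) :
    lap1 h (fun j => a j - b j) i = lap1 h a i - lap1 h b i := by
  simp only [lap1]
  ring

theorem lap1_nonneg_iff {h : ℝ} (hh : h ≠ 0) {w : ℕ → ℝ} {i : ℕ} :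
    0 ≤ lap1 h w i ↔ 2 * w i ≤ w (i - 1) + w (i + 1) := by
  rw [lap1, le_div_iff₀ (by positivity), zero_mul]
  constructor <;> intro <;> linarith

open Classical in
theorem stmt_11 (m N : ℕ) (h : ℝ) (hh : 0 < h)
    (f : Fin m → ℝ → ℝ) (hfmono : ∀ l, Monotone (f l))
    (u v : Fin m → ℕ → ℝ)
    (hvpos : ∀ l α, α ≤ N → 0 ≤ v l α)
    (hu0 : ∀ l, u l 0 = 0) (huN : ∀ l, u l N = 0)
    (hv0 : ∀ l, v l 0 = 0)
    (hueq : ∀ l α, 1 ≤ α → α < N → 0 < u l α → lap1 h (hatFn u l) α = f l (u l α))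
    (hveq : ∀ l α, 1 ≤ α → α < N → 0 < v l α → lap1 h (hatFn v l) α = f l (v l α))
    (hvle : ∀ l α, 1 ≤ α → α < N → v l α = 0 → lap1 h (hatFn v l) α ≤ f l (v l α)) :
    ∀ l : Fin m,
      (Finset.Icc 0 N).sup' ⟨0, by simp⟩ (fun α => hatFn u l α - hatFn v l α) =
      ((Finset.Icc 0 N).filter (fun α => u l α ≤ v l α)).sup'
        ⟨0, by simp [Finset.mem_filter, hu0 l, hv0 l]⟩
        (fun α => hatFn u l α - hatFn v l α) := by
  intro l
  refine Finset.sup'_Icc_eq_sup'_filter_of_subharmonic (fun α hαN hnle => ?_) _ _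
  have hvu : v l α < u l α := lt_of_not_ge hnle
  have hu : 0 < u l α := (hvpos l α hαN).trans_lt hvu
  have hα0 : 0 < α := Nat.pos_of_ne_zero (by rintro rfl; simp [hu0] at hu)
  have hαN : α < N := hαN.lt_of_ne (by rintro rfl; simp [huN] at hu)
  have hv : lap1 h (hatFn v l) α ≤ f l (v l α) := by
    rcases (hvpos l α hαN.le).eq_or_lt with hvzero | hvpos'
    · exact hvle l α hα0 hαN hvzero.symm
    · exact (hveq l α hα0 hαN hvpos').le
  refine ⟨hα0, hαN, (lap1_nonneg_iff hh.ne' (w := fun j => hatFn u l j - hatFn v l j)).mp ?_⟩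
  rw [lap1_sub, sub_nonneg, hueq l α hα0 hαN hu]
  exact hv.trans (hfmono l hvu.le)
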